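/- Induction step over sequence positions: let 1 ≤ t ≤ K and t + 1 ≤ T, and let y : Fin T → α be an initial (gold) sequence. If for every prefix (z_1,…,z_t) ∈ α^t the q^K_y-marginal probability that the first t output tokens equal (z_1,…,z_t) equals ∏_{s=1}^{t} μ(z_1,…,z_{s-1})(z_s), then for every prefix (z_1,…,z_{t+1}) ∈ α^{t+1} the q^{K+1}_y-marginal probability that the first t+1 output tokens equal (z_1,…,z_{t+1}) equals ∏_{s=1}^{t+1} μ(z_1,…,z_{s-1})(z_s). -/

import Mathlib

open scoped ENNReal BigOperators

noncomputable section

variable {α : Type*}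

/-- The list of tokens of `w` strictly before position `t` (0-indexed),
i.e. the prefix `(w_1, …, w_{t-1})` in 1-indexed notation. -/
def prefList {n : ℕ} (w : Fin n → α) (t : Fin n) : List α :=
  List.ofFn (fun s : Fin (t : ℕ) => w ⟨(s : ℕ), s.2.trans t.2⟩)

/-- The sample-decoding probability of the sequence `z`:
`P_T(z) = ∏_{t=1}^T μ(z_1,…,z_{t-1})(z_t)`. -/
def sampleDecodeProb {T : ℕ} (μ : List α → PMF α) (z : Fin T → α) : ℝ≥0∞ :=
  ∏ t : Fin T, μ (prefList z t) (z t)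

/-- The pass kernel `Q_k` (mixing probability `p = 1`): given input sequence `w`,
positions `t < k` (1-indexed) are copied from `w` deterministically, and each position
`t ≥ k` is drawn independently from `μ(w_1,…,w_{t-1})`. -/
def passKernel [Fintype α] [DecidableEq α] {T : ℕ}
    (μ : List α → PMF α) (k : ℕ) (w : Fin T → α) : PMF (Fin T → α) :=
  PMF.ofFintype
    (fun z => ∏ t : Fin T,
      if (t : ℕ) + 1 < k then (if z t = w t then 1 else 0)
      else μ (prefList w t) (z t))
    (by
      classical
      have h : ∀ t : Fin T,
          (∑ a : α, if (t : ℕ) + 1 < k then (if a = w t then (1 : ℝ≥0∞) else 0)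
            else μ (prefList w t) a) = 1 := by
        intro t
        split
        · simp
        · rw [← tsum_fintype (L := SummationFilter.unconditional _)]
          exact (μ (prefList w t)).tsum_coe
      calc
        (∑ z : Fin T → α, ∏ t : Fin T,
            if (t : ℕ) + 1 < k then (if z t = w t then (1 : ℝ≥0∞) else 0)
            else μ (prefList w t) (z t))
            = ∏ t : Fin T, ∑ a : α,
                (if (t : ℕ) + 1 < k then (if a = w t then (1 : ℝ≥0∞) else 0)
                  else μ (prefList w t) a) := by
              rw [Finset.prod_univ_sum]
              rw [Fintype.piFinset_univ]
        _ = 1 := by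
              rw [Finset.prod_congr rfl (fun t _ => h t)]
              simp)

/-- The Parallel Scheduled Sampling proposal distribution with mixing probability `p = 1`
after `K` passes, starting from the gold sequence `y`: the kernels `Q_1, …, Q_K` applied
in succession to the point mass at `y`. -/
def pssProposal [Fintype α] [DecidableEq α] {T : ℕ}
    (μ : List α → PMF α) (y : Fin T → α) : ℕ → PMF (Fin T → α)
  | 0 => PMF.pure y
  | k + 1 => (pssProposal μ y k).bind (passKernel μ (k + 1))

/-- The probability, under the distribution `q` on sequences, of the event that the
first `t` output tokens equal the prefix `z : Fin t → α`. -/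
def prefixProb {T t : ℕ} (q : PMF (Fin T → α)) (z : Fin t → α) : ℝ≥0∞ :=
  q.toOuterMeasure {w | ∀ s : Fin T, (h : (s : ℕ) < t) → w s = z ⟨(s : ℕ), h⟩}

/- Each pass kernel is a product of one-token distributions, and the event that a sequence
starts with a given prefix is a box. Pass `k` copies positions `1, …, k - 1`, so it leaves the
law of prefixes of length `< k` unchanged; pass `t + 1` copies the first `t` tokens and draws
token `t + 1` from `μ` given exactly those tokens. Hence the law of a length-`(t + 1)` prefix
under `q^{K+1}` is its law under `q^{t+1}`, which is the law of its first `t` tokens under `q^t`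
(equivalently under `q^K`, as `t ≤ K`) times the next-token probability. -/

theorem PMF.toOuterMeasure_univ_pi_of_apply_eq_prod {ι β : Type*} [Fintype ι] [Fintype β]
    {q : PMF (ι → β)} {p : ι → PMF β} (hq : ∀ v, q v = ∏ i, p i (v i)) (A : ι → Set β) :
    q.toOuterMeasure (Set.univ.pi A) = ∏ i, (p i).toOuterMeasure (A i) := by
  classical
  simp only [PMF.toOuterMeasure_apply_fintype, Fintype.prod_sum, Set.indicator_apply,
    Set.mem_univ_pi, hq, Fintype.prod_ite_zero]

theorem PMF.toOuterMeasure_pure_eq_indicator {β : Type*} (a : β) (s : Set β) :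
    (PMF.pure a).toOuterMeasure s = s.indicator 1 a := by
  classical
  by_cases h : a ∈ s <;> simp [h]

theorem PMF.toOuterMeasure_bind_of_eq_indicator_mul {β γ : Type*} {q : PMF β} {f : β → PMF γ}
    {s : Set γ} {E : Set β} {c : ℝ≥0∞} (h : ∀ w, (f w).toOuterMeasure s = E.indicator 1 w * c) :
    (q.bind f).toOuterMeasure s = q.toOuterMeasure E * c := by
  rw [PMF.toOuterMeasure_bind_apply, PMF.toOuterMeasure_apply, ← ENNReal.tsum_mul_right]
  refine tsum_congr fun w => ?_
  by_cases hw : w ∈ E <;> simp [h, hw]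

def prefixFiber {T m : ℕ} (z : Fin m → α) (s : Fin T) : Set α :=
  if h : (s : ℕ) < m then {z ⟨s, h⟩} else Set.univ

theorem prefixProb_eq_toOuterMeasure_pi {T m : ℕ} (q : PMF (Fin T → α)) (z : Fin m → α) :
    prefixProb q z = q.toOuterMeasure (Set.univ.pi (prefixFiber z)) := by
  unfold prefixProb
  congr 1
  ext w
  simp only [Set.mem_ofPred_eq, Set.mem_univ_pi, prefixFiber]
  refine forall_congr' fun s => ?_
  by_cases hs : (s : ℕ) < m <;> simp [hs]

def passCoord {T : ℕ} (μ : List α → PMF α) (k : ℕ) (w : Fin T → α) (s : Fin T) : PMF α :=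
  if (s : ℕ) + 1 < k then PMF.pure (w s) else μ (prefList w s)

theorem passKernel_apply [Fintype α] [DecidableEq α] {T : ℕ} (μ : List α → PMF α) (k : ℕ)
    (w v : Fin T → α) : passKernel μ k w v = ∏ s, passCoord μ k w s (v s) := by
  simp only [passKernel, PMF.ofFintype_apply, passCoord]
  refine Finset.prod_congr rfl fun s _ => ?_
  split_ifs <;> simp [PMF.pure_apply, *]

theorem passCoord_toOuterMeasure_prefixFiber_of_lt {T m k : ℕ} (μ : List α → PMF α)
    (hmk : m < k) (w : Fin T → α) (z : Fin m → α) (s : Fin T) :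
    (passCoord μ k w s).toOuterMeasure (prefixFiber z s) = (prefixFiber z s).indicator 1 (w s) := by
  by_cases hs : (s : ℕ) < m
  · rw [passCoord, if_pos (by omega), PMF.toOuterMeasure_pure_eq_indicator]
  · simp [prefixFiber, hs, PMF.toOuterMeasure_apply_eq_one_iff]

theorem passCoord_toOuterMeasure_prefixFiber_succ {T t : ℕ} (μ : List α → PMF α)
    (htT : t < T) (w : Fin T → α) (z : Fin (t + 1) → α) (s : Fin T) :
    (passCoord μ (t + 1) w s).toOuterMeasure (prefixFiber z s)
      = (prefixFiber (Fin.init z) s).indicator 1 (w s)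
        * if s = ⟨t, htT⟩ then μ (prefList w s) (z (Fin.last t)) else 1 := by
  rcases lt_trichotomy (s : ℕ) t with hs | rfl | hs
  · have hst : s ≠ ⟨t, htT⟩ := Fin.ne_of_val_ne hs.ne
    rw [passCoord, if_pos (by omega), PMF.toOuterMeasure_pure_eq_indicator, if_neg hst, mul_one]
    simp [prefixFiber, hs, Nat.lt_succ_of_lt hs, Fin.init]
  · rw [passCoord, if_neg (by omega), if_pos rfl]
    simp [prefixFiber, PMF.toOuterMeasure_apply_singleton, Fin.last]
  · have hst : s ≠ ⟨t, htT⟩ := Fin.ne_of_val_ne hs.ne'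
    simp [prefixFiber, hs.not_gt, (Nat.succ_le_of_lt hs).not_gt, hst,
      PMF.toOuterMeasure_apply_eq_one_iff]

theorem prefList_eq_of_mem_univ_pi_prefixFiber_init {T t : ℕ} (htT : t < T) {w : Fin T → α}
    {z : Fin (t + 1) → α} (hw : w ∈ Set.univ.pi (prefixFiber (Fin.init z))) :
    prefList w ⟨t, htT⟩ = prefList z (Fin.last t) := by
  unfold prefList
  congr 1
  funext j
  have hj : w ⟨j, j.2.trans htT⟩ = z j.castSucc := by
    simpa [prefixFiber, j.2, Fin.init] using hw ⟨j, j.2.trans htT⟩ trivial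
  exact hj

section PassKernel

variable [Fintype α] [DecidableEq α] (μ : List α → PMF α)

theorem passKernel_toOuterMeasure_prefix_of_lt {T m k : ℕ} (hmk : m < k) (w : Fin T → α)
    (z : Fin m → α) :
    (passKernel μ k w).toOuterMeasure (Set.univ.pi (prefixFiber z))
      = (Set.univ.pi (prefixFiber z)).indicator 1 w := by
  rw [PMF.toOuterMeasure_univ_pi_of_apply_eq_prod (passKernel_apply μ k w), ← Finset.coe_univ,
    Set.indicator_pi_one_apply]
  exact Finset.prod_congr rfl fun s _ => passCoord_toOuterMeasure_prefixFiber_of_lt μ hmk w z s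

theorem passKernel_toOuterMeasure_prefix_succ {T t : ℕ} (htT : t < T) (w : Fin T → α)
    (z : Fin (t + 1) → α) :
    (passKernel μ (t + 1) w).toOuterMeasure (Set.univ.pi (prefixFiber z))
      = (Set.univ.pi (prefixFiber (Fin.init z))).indicator 1 w
        * μ (prefList z (Fin.last t)) (z (Fin.last t)) := by
  rw [PMF.toOuterMeasure_univ_pi_of_apply_eq_prod (passKernel_apply μ (t + 1) w),
    Finset.prod_congr rfl fun s _ => passCoord_toOuterMeasure_prefixFiber_succ μ htT w z s,
    Finset.prod_mul_distrib, Fintype.prod_ite_eq', ← Set.indicator_pi_one_apply,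
    Finset.coe_univ]
  by_cases hw : w ∈ Set.univ.pi (prefixFiber (Fin.init z))
  · rw [prefList_eq_of_mem_univ_pi_prefixFiber_init htT hw]
  · simp [hw]

theorem prefixProb_bind_passKernel_of_lt {T m k : ℕ} (hmk : m < k) (q : PMF (Fin T → α))
    (z : Fin m → α) : prefixProb (q.bind (passKernel μ k)) z = prefixProb q z := by
  simp only [prefixProb_eq_toOuterMeasure_pi]
  simpa using PMF.toOuterMeasure_bind_of_eq_indicator_mul (q := q) (c := 1)
    fun w => (passKernel_toOuterMeasure_prefix_of_lt μ hmk w z).trans (mul_one _).symm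

theorem prefixProb_bind_passKernel_succ {T t : ℕ} (htT : t < T) (q : PMF (Fin T → α))
    (z : Fin (t + 1) → α) :
    prefixProb (q.bind (passKernel μ (t + 1))) z
      = prefixProb q (Fin.init z) * μ (prefList z (Fin.last t)) (z (Fin.last t)) := by
  simp only [prefixProb_eq_toOuterMeasure_pi]
  exact PMF.toOuterMeasure_bind_of_eq_indicator_mul
    fun w => passKernel_toOuterMeasure_prefix_succ μ htT w z

theorem prefixProb_pssProposal_of_le {T m j : ℕ} (y : Fin T → α) (z : Fin m → α) (hmj : m ≤ j) :
    prefixProb (pssProposal μ y j) z = prefixProb (pssProposal μ y m) z := by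
  induction j, hmj using Nat.le_induction with
  | base => rfl
  | succ j hmj ih =>
    rw [← ih]
    exact prefixProb_bind_passKernel_of_lt μ (Nat.lt_succ_of_le hmj) _ z

end PassKernel

theorem pss_prefix_induction_step_general [Fintype α] [DecidableEq α]
    {T t K : ℕ} (htK : t ≤ K) (htT : t + 1 ≤ T)
    (μ : List α → PMF α) (y : Fin T → α)
    (ih : ∀ z : Fin t → α,
      prefixProb (pssProposal μ y K) z = ∏ s : Fin t, μ (prefList z s) (z s)) :
    ∀ z : Fin (t + 1) → α,
      prefixProb (pssProposal μ y (K + 1)) z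
        = ∏ s : Fin (t + 1), μ (prefList z s) (z s) := by
  intro z
  calc prefixProb (pssProposal μ y (K + 1)) z
      = prefixProb (pssProposal μ y (t + 1)) z :=
        prefixProb_pssProposal_of_le μ y z (Nat.succ_le_succ htK)
    _ = prefixProb (pssProposal μ y t) (Fin.init z)
          * μ (prefList z (Fin.last t)) (z (Fin.last t)) :=
        prefixProb_bind_passKernel_succ μ htT _ z
    _ = ∏ s : Fin (t + 1), μ (prefList z s) (z s) := by
        rw [← prefixProb_pssProposal_of_le μ y _ htK, ih, Fin.prod_univ_castSucc]
        -- `prefList (Fin.init z) s` unfolds to `prefList z s.castSucc`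
        rfl

/-- Induction step over sequence positions: for `1 ≤ t ≤ K` and
`t + 1 ≤ T`, if the `q^K_y`-marginal of every length-`t` prefix factorizes
autoregressively, then the `q^{K+1}_y`-marginal of every length-`(t+1)` prefix
factorizes autoregressively as well. -/
theorem pss_prefix_induction_step [Fintype α] [DecidableEq α] [Nonempty α]
    {T t K : ℕ} (hT : 0 < T) (ht : 1 ≤ t) (htK : t ≤ K) (htT : t + 1 ≤ T)
    (μ : List α → PMF α) (y : Fin T → α)
    (ih : ∀ z : Fin t → α,
      prefixProb (pssProposal μ y K) z = ∏ s : Fin t, μ (prefList z s) (z s)) :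
    ∀ z : Fin (t + 1) → α,
      prefixProb (pssProposal μ y (K + 1)) z
        = ∏ s : Fin (t + 1), μ (prefList z s) (z s) :=
  pss_prefix_induction_step_general htK htT μ y ih

end
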